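/- Let α ∈ {+1, −1}, let A and B = A + α Z Zᵀ be n×n real symmetric positive definite matrices, where Z is n×k. Let C̃ be an n×n symmetric positive semidefinite matrix such that A^{1/2} + α C̃ is positive definite, and define the residual R(C̃) = Z Zᵀ − A^{1/2} C̃ − C̃ A^{1/2} − α C̃². Then ‖(A + α Z Zᵀ)^{1/2} − (A^{1/2} + α C̃)‖_F ≤ (n^{1/2} ‖R(C̃)‖_F)^{1/2} and ‖(A + α Z Zᵀ)^{1/2} − (A^{1/2} + α C̃)‖₂ ≤ min( ‖R(C̃)‖_F / √(λ_min(A + α Z Zᵀ)), (n^{1/2} ‖R(C̃)‖_F)^{1/2} ). -/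

import Mathlib

open Matrix

/-- The Frobenius norm of a real matrix. -/
noncomputable def frobNorm {n m : ℕ} (M : Matrix (Fin n) (Fin m) ℝ) : ℝ :=
  Real.sqrt (∑ i, ∑ j, (M i j) ^ 2)

/-- Helper (removed from Mathlib): `Aᵀ * A` is Hermitian over a ring with trivial star. -/
theorem Matrix.isHermitian_transpose_mul_self {m n : Type*} {α : Type*} [CommSemiring α]
    [StarRing α] [TrivialStar α] [Fintype m] (A : Matrix m n α) : (Aᵀ * A).IsHermitian := by
  rw [IsHermitian, conjTranspose, transpose_mul, transpose_transpose]
  ext i j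
  simp [Matrix.mul_apply, mul_comm]

section
open scoped ComplexOrder

/-- The positive semidefinite square root, with its old Mathlib definition (removed). -/
noncomputable def Matrix.PosSemidef.sqrt {𝕜 : Type*} [RCLike 𝕜] {n : Type*} [Fintype n]
    [DecidableEq n] {A : Matrix n n 𝕜} (hA : A.PosSemidef) : Matrix n n 𝕜 :=
  hA.1.eigenvectorUnitary.1 * diagonal ((↑) ∘ (√·) ∘ hA.1.eigenvalues) *
  (star hA.1.eigenvectorUnitary : Matrix n n 𝕜)

end

/-- The spectral norm (largest singular value) of a real square matrix. -/
noncomputable def specNorm {n : ℕ} (M : Matrix (Fin n) (Fin n) ℝ) : ℝ :=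
  ⨆ i, Real.sqrt ((Matrix.isHermitian_transpose_mul_self M).eigenvalues i)

/-- The smallest eigenvalue of a real symmetric matrix. -/
noncomputable def lambdaMin {n : ℕ} {M : Matrix (Fin n) (Fin n) ℝ}
    (hM : M.IsHermitian) : ℝ :=
  ⨅ i, hM.eigenvalues i

/-!
Write `S = (A + α Z Zᵀ)^{1/2}`, `T = A^{1/2} + α C̃` and `E = S - T`. Expanding `S² - T²` gives the
Sylvester identity `S E + E T = α R(C̃)`. For a unit eigenvector `u` of `E` with eigenvalue `d` it
reads `d (uᵀSu + uᵀTu) = α uᵀRu`, while `uᵀSu - uᵀTu = d`. As both quadratic forms are nonnegative,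
`d² ≤ |uᵀRu|`; as `uᵀSu ≥ λ_min(B)^{1/2}`, also `|d| λ_min(B)^{1/2} ≤ |uᵀRu|`. The numbers `uᵀRu`
are the diagonal of `R` in the eigenbasis of `E`, so summing the first inequality and applying
Cauchy–Schwarz gives `‖E‖_F² ≤ √n ‖R‖_F`. The second bounds every `|d|`, hence `‖E‖₂`, by
`‖R‖_F / λ_min(B)^{1/2}`, and `‖E‖₂ ≤ ‖E‖_F` gives the other half of the minimum.
-/

section FrobeniusNorm

variable {n : ℕ}

lemma sum_sq_eq_trace_transpose_mul {m : ℕ} (M : Matrix (Fin m) (Fin n) ℝ) :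
    ∑ i, ∑ j, M i j ^ 2 = trace (Mᵀ * M) := by
  simp only [trace, diag, mul_apply, transpose_apply, sq]
  exact Finset.sum_comm

lemma frobNorm_nonneg {m : ℕ} (M : Matrix (Fin m) (Fin n) ℝ) : 0 ≤ frobNorm M :=
  Real.sqrt_nonneg _

lemma frobNorm_smul {m : ℕ} (c : ℝ) (M : Matrix (Fin m) (Fin n) ℝ) :
    frobNorm (c • M) = |c| * frobNorm M := by
  simp only [frobNorm, Matrix.smul_apply, smul_eq_mul, mul_pow, ← Finset.mul_sum,
    Real.sqrt_mul (sq_nonneg c), Real.sqrt_sq_eq_abs]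

lemma frobNorm_diagonal (d : Fin n → ℝ) : frobNorm (diagonal d) = √(∑ i, d i ^ 2) := by
  simp [frobNorm, diagonal_apply, ite_pow]

lemma abs_apply_le_frobNorm {m : ℕ} (M : Matrix (Fin m) (Fin n) ℝ) (i : Fin m) (j : Fin n) :
    |M i j| ≤ frobNorm M := by
  refine Real.abs_le_sqrt ?_
  calc M i j ^ 2 ≤ ∑ j', M i j' ^ 2 :=
        Finset.single_le_sum (fun _ _ => sq_nonneg _) (Finset.mem_univ j)
    _ ≤ ∑ i', ∑ j', M i' j' ^ 2 :=
        Finset.single_le_sum (f := fun i' => ∑ j', M i' j' ^ 2)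
          (fun _ _ => Finset.sum_nonneg fun _ _ => sq_nonneg _) (Finset.mem_univ i)

lemma sum_abs_diag_le_sqrt_mul_frobNorm (M : Matrix (Fin n) (Fin n) ℝ) :
    ∑ i, |M i i| ≤ √n * frobNorm M := by
  calc ∑ i, |M i i| = ∑ i, 1 * |M i i| := by simp
    _ ≤ √(∑ _i : Fin n, 1 ^ 2) * √(∑ i, |M i i| ^ 2) := Real.sum_mul_le_sqrt_mul_sqrt _ _ _
    _ ≤ √n * frobNorm M := by
        simp only [one_pow, Finset.sum_const, Finset.card_univ, Fintype.card_fin, nsmul_eq_mul,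
          mul_one, sq_abs, frobNorm]
        gcongr with i
        exact Finset.single_le_sum (f := fun j => M i j ^ 2) (fun _ _ => sq_nonneg _)
          (Finset.mem_univ i)

lemma trace_conjStarAlgAut {ι R : Type*} [Fintype ι] [DecidableEq ι] [CommSemiring R] [StarRing R]
    (u : unitary (Matrix ι ι R)) (X : Matrix ι ι R) :
    trace (Unitary.conjStarAlgAut R _ u X) = trace X := by
  rw [Unitary.conjStarAlgAut_apply, trace_mul_cycle, Unitary.coe_star_mul_self, one_mul]

lemma frobNorm_conjStarAlgAut (u : unitary (Matrix (Fin n) (Fin n) ℝ))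
    (M : Matrix (Fin n) (Fin n) ℝ) :
    frobNorm (Unitary.conjStarAlgAut ℝ _ u M) = frobNorm M := by
  simp only [frobNorm, sum_sq_eq_trace_transpose_mul, ← conjTranspose_eq_transpose_of_trivial,
    ← star_eq_conjTranspose, ← map_star, ← map_mul, trace_conjStarAlgAut]

end FrobeniusNorm

namespace Matrix

section Eigenbasis

variable {ι 𝕜 : Type*} [Fintype ι] [DecidableEq ι]

open scoped ComplexOrder in
lemma PosSemidef.conjStarAlgAut [RCLike 𝕜] {A : Matrix ι ι 𝕜} (hA : A.PosSemidef)
    (u : unitary (Matrix ι ι 𝕜)) : (Unitary.conjStarAlgAut 𝕜 _ u A).PosSemidef := by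
  simpa [star_eq_conjTranspose] using hA.mul_mul_conjTranspose_same (u : Matrix ι ι 𝕜)

variable {E : Matrix ι ι ℝ}

noncomputable abbrev IsHermitian.conjEigenbasis (hE : E.IsHermitian) :
    Matrix ι ι ℝ ≃⋆ₐ[ℝ] Matrix ι ι ℝ :=
  Unitary.conjStarAlgAut ℝ _ (star hE.eigenvectorUnitary)

lemma IsHermitian.conjEigenbasis_self (hE : E.IsHermitian) :
    hE.conjEigenbasis E = diagonal hE.eigenvalues :=
  hE.conjStarAlgAut_star_eigenvectorUnitary

end Eigenbasis

namespace IsHermitian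

variable {n : ℕ} {E : Matrix (Fin n) (Fin n) ℝ}

lemma frobNorm_eq (hE : E.IsHermitian) : frobNorm E = √(∑ i, hE.eigenvalues i ^ 2) := by
  rw [← frobNorm_conjStarAlgAut (star hE.eigenvectorUnitary), ← frobNorm_diagonal,
    ← hE.conjEigenbasis_self]

lemma abs_eigenvalues_le_frobNorm (hE : E.IsHermitian) (i : Fin n) :
    |hE.eigenvalues i| ≤ frobNorm E := by
  rw [hE.frobNorm_eq]
  exact Real.abs_le_sqrt (Finset.single_le_sum (fun _ _ => sq_nonneg _) (Finset.mem_univ i))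

lemma specNorm_le (hE : E.IsHermitian) {m : ℝ} (hm : 0 ≤ m)
    (h : ∀ i, |hE.eigenvalues i| ≤ m) : specNorm E ≤ m := by
  refine Real.iSup_le (fun j => ?_) hm
  have hspec : spectrum ℝ (Eᵀ * E) = (· ^ 2) '' Set.range hE.eigenvalues := by
    rw [← conjTranspose_eq_transpose_of_trivial, hE.eq, ← sq,
      ← cfc_pow_id (R := ℝ) E 2 hE.isSelfAdjoint, cfc_map_spectrum _ E hE.isSelfAdjoint,
      hE.spectrum_real_eq_range_eigenvalues]
  have hj := (isHermitian_transpose_mul_self E).eigenvalues_mem_spectrum_real j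
  rw [hspec] at hj
  obtain ⟨-, ⟨i, rfl⟩, hi⟩ := hj
  rw [← hi, Real.sqrt_sq_eq_abs]
  exact h i

lemma specNorm_le_frobNorm (hE : E.IsHermitian) : specNorm E ≤ frobNorm E :=
  hE.specNorm_le (frobNorm_nonneg E) hE.abs_eigenvalues_le_frobNorm

end IsHermitian

section Sqrt

open scoped MatrixOrder

variable {n : ℕ} {B : Matrix (Fin n) (Fin n) ℝ}

lemma PosSemidef.sqrt_eq_cfc (hB : B.PosSemidef) : hB.sqrt = cfc Real.sqrt B := by
  rw [hB.1.cfc_eq]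
  rfl

lemma PosSemidef.sqrt_mul_self (hB : B.PosSemidef) : hB.sqrt * hB.sqrt = B := by
  rw [hB.sqrt_eq_cfc, ← cfc_mul Real.sqrt Real.sqrt B]
  refine (cfc_congr fun x hx => Real.mul_self_sqrt ?_).trans (cfc_id ℝ B hB.1.isSelfAdjoint)
  obtain ⟨i, rfl⟩ := hB.1.spectrum_real_eq_range_eigenvalues ▸ hx
  exact hB.eigenvalues_nonneg i

lemma PosSemidef.posSemidef_sqrt (hB : B.PosSemidef) : hB.sqrt.PosSemidef := by
  rw [hB.sqrt_eq_cfc, ← nonneg_iff_posSemidef]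
  exact cfc_nonneg fun x _ => Real.sqrt_nonneg x

lemma PosDef.posSemidef_sqrt_sub_sqrt_lambdaMin_smul_one (hB : B.PosDef) :
    (hB.posSemidef.sqrt - √(lambdaMin hB.1) • 1).PosSemidef := by
  rw [← le_iff, ← Algebra.algebraMap_eq_smul_one, hB.posSemidef.sqrt_eq_cfc]
  refine algebraMap_le_cfc _ _ _ fun x hx => Real.sqrt_le_sqrt ?_
  obtain ⟨i, rfl⟩ := hB.1.spectrum_real_eq_range_eigenvalues ▸ hx
  exact ciInf_le (Set.finite_range _).bddBelow i

lemma PosDef.lambdaMin_pos [Nonempty (Fin n)] (hB : B.PosDef) : 0 < lambdaMin hB.1 := by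
  obtain ⟨i, hi⟩ := exists_eq_ciInf_of_finite (f := hB.1.eigenvalues)
  rw [lambdaMin, ← hi]
  exact hB.eigenvalues_pos i

end Sqrt

end Matrix

lemma sq_sub_le_abs_mul_sub_add {s t : ℝ} (hs : 0 ≤ s) (ht : 0 ≤ t) :
    (s - t) ^ 2 ≤ |(s - t) * (s + t)| := by
  rw [abs_mul, abs_of_nonneg (add_nonneg hs ht), sq, ← abs_mul_abs_self]
  gcongr
  exact abs_sub_le_iff.2 ⟨by linarith, by linarith⟩

lemma mul_sub_add_sub_mul {R : Type*} [Ring R] (S T : R) :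
    S * (S - T) + (S - T) * T = S * S - T * T := by
  noncomm_ring

section Sylvester

variable {ι : Type*} [Fintype ι] [DecidableEq ι] {S T : Matrix ι ι ℝ}
  (hE : (S - T).IsHermitian)

lemma conjEigenbasis_sylvester_apply_self (i : ι) :
    hE.conjEigenbasis (S * (S - T) + (S - T) * T) i i =
      hE.eigenvalues i * (hE.conjEigenbasis S i i + hE.conjEigenbasis T i i) := by
  rw [map_add, map_mul, map_mul, hE.conjEigenbasis_self, Matrix.add_apply, mul_diagonal,
    diagonal_mul]
  ring

lemma eigenvalues_sub_eq_conjEigenbasis_sub (i : ι) :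
    hE.eigenvalues i = hE.conjEigenbasis S i i - hE.conjEigenbasis T i i := by
  rw [← Matrix.sub_apply, ← map_sub, hE.conjEigenbasis_self, diagonal_apply_eq]

lemma sq_eigenvalues_le_abs_conjEigenbasis_sylvester (hS : S.PosSemidef) (hT : T.PosSemidef)
    (i : ι) :
    hE.eigenvalues i ^ 2 ≤ |hE.conjEigenbasis (S * (S - T) + (S - T) * T) i i| := by
  rw [conjEigenbasis_sylvester_apply_self, eigenvalues_sub_eq_conjEigenbasis_sub hE]
  exact sq_sub_le_abs_mul_sub_add (hS.conjStarAlgAut _).diag_nonneg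
    (hT.conjStarAlgAut _).diag_nonneg

lemma abs_eigenvalues_mul_le_abs_conjEigenbasis_sylvester {c : ℝ} (hS : (S - c • 1).PosSemidef)
    (hT : T.PosSemidef) (i : ι) :
    |hE.eigenvalues i| * c ≤ |hE.conjEigenbasis (S * (S - T) + (S - T) * T) i i| := by
  have hSc := (hS.conjStarAlgAut (star hE.eigenvectorUnitary)).diag_nonneg (i := i)
  rw [map_sub, map_smul, map_one, Matrix.sub_apply, Matrix.smul_apply, one_apply_eq,
    smul_eq_mul, mul_one] at hSc
  have hT0 : 0 ≤ hE.conjEigenbasis T i i := (hT.conjStarAlgAut _).diag_nonneg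
  rw [conjEigenbasis_sylvester_apply_self, abs_mul]
  gcongr
  exact (by linarith : c ≤ _).trans (le_abs_self _)

end Sylvester

section SylvesterBounds

variable {n : ℕ} {S T : Matrix (Fin n) (Fin n) ℝ}

theorem sq_frobNorm_sub_le (hS : S.PosSemidef) (hT : T.PosSemidef) :
    frobNorm (S - T) ^ 2 ≤ √n * frobNorm (S * (S - T) + (S - T) * T) := by
  have hE := hS.1.sub hT.1
  calc frobNorm (S - T) ^ 2 = ∑ i, hE.eigenvalues i ^ 2 := by
        rw [hE.frobNorm_eq, Real.sq_sqrt (by positivity)]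
    _ ≤ ∑ i, |hE.conjEigenbasis (S * (S - T) + (S - T) * T) i i| :=
        Finset.sum_le_sum fun i _ => sq_eigenvalues_le_abs_conjEigenbasis_sylvester hE hS hT i
    _ ≤ √n * frobNorm (S * (S - T) + (S - T) * T) := by
        rw [← frobNorm_conjStarAlgAut (star hE.eigenvectorUnitary)]
        exact sum_abs_diag_le_sqrt_mul_frobNorm _

theorem abs_eigenvalues_sub_mul_le_frobNorm {c : ℝ} (hS : (S - c • 1).PosSemidef)
    (hT : T.PosSemidef) (hE : (S - T).IsHermitian) (i : Fin n) :
    |hE.eigenvalues i| * c ≤ frobNorm (S * (S - T) + (S - T) * T) := by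
  rw [← frobNorm_conjStarAlgAut (star hE.eigenvectorUnitary)]
  exact (abs_eigenvalues_mul_le_abs_conjEigenbasis_sylvester hE hS hT i).trans
    (abs_apply_le_frobNorm _ i i)

end SylvesterBounds

theorem sqrt_update_error_bound_general {n k : ℕ} (α : ℝ) (hα : α = 1 ∨ α = -1)
    (A : Matrix (Fin n) (Fin n) ℝ) (Z : Matrix (Fin n) (Fin k) ℝ)
    (hA : A.PosDef) (hB : (A + α • (Z * Zᵀ)).PosDef)
    (Ct : Matrix (Fin n) (Fin n) ℝ)
    (hpos : (hA.posSemidef.sqrt + α • Ct).PosDef) :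
    frobNorm (hB.posSemidef.sqrt - (hA.posSemidef.sqrt + α • Ct)) ≤
      Real.sqrt (Real.sqrt n *
        frobNorm (Z * Zᵀ - hA.posSemidef.sqrt * Ct - Ct * hA.posSemidef.sqrt - α • Ct ^ 2)) ∧
    specNorm (hB.posSemidef.sqrt - (hA.posSemidef.sqrt + α • Ct)) ≤
      min (frobNorm (Z * Zᵀ - hA.posSemidef.sqrt * Ct - Ct * hA.posSemidef.sqrt - α • Ct ^ 2) /
            Real.sqrt (lambdaMin hB.1))
        (Real.sqrt (Real.sqrt n *
          frobNorm (Z * Zᵀ - hA.posSemidef.sqrt * Ct - Ct * hA.posSemidef.sqrt - α • Ct ^ 2))) := by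
  set P := hA.posSemidef.sqrt
  set S := hB.posSemidef.sqrt
  set T := P + α • Ct
  set R := Z * Zᵀ - P * Ct - Ct * P - α • Ct ^ 2
  have hSc := hB.posSemidef_sqrt_sub_sqrt_lambdaMin_smul_one
  have hS : S.PosSemidef := hB.posSemidef.posSemidef_sqrt
  have hE := hS.1.sub hpos.1
  have hsylvester : S * (S - T) + (S - T) * T = α • R := by
    rw [mul_sub_add_sub_mul, hB.posSemidef.sqrt_mul_self, ← hA.posSemidef.sqrt_mul_self]
    simp only [T, R, add_mul, mul_add, smul_mul_assoc, mul_smul_comm, sq]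
    rcases hα with rfl | rfl <;> module
  have hfrob : frobNorm (S * (S - T) + (S - T) * T) = frobNorm R := by
    rw [hsylvester, frobNorm_smul, show |α| = 1 by rcases hα with rfl | rfl <;> simp, one_mul]
  have hbound : frobNorm (S - T) ≤ √(√n * frobNorm R) :=
    Real.le_sqrt_of_sq_le (hfrob ▸ sq_frobNorm_sub_le hS hpos.posSemidef)
  refine ⟨hbound, le_min ?_ (hE.specNorm_le_frobNorm.trans hbound)⟩
  refine hE.specNorm_le (div_nonneg (frobNorm_nonneg R) (Real.sqrt_nonneg _)) fun i => ?_
  have : Nonempty (Fin n) := ⟨i⟩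
  rw [le_div_iff₀ (Real.sqrt_pos.2 hB.lambdaMin_pos), ← hfrob]
  exact abs_eigenvalues_sub_mul_le_frobNorm hSc hpos.posSemidef hE i

theorem sqrt_update_error_bound {n k : ℕ} (α : ℝ) (hα : α = 1 ∨ α = -1)
    (A : Matrix (Fin n) (Fin n) ℝ) (Z : Matrix (Fin n) (Fin k) ℝ)
    (hA : A.PosDef) (hB : (A + α • (Z * Zᵀ)).PosDef)
    (Ct : Matrix (Fin n) (Fin n) ℝ) (hC : Ct.PosSemidef)
    (hpos : (hA.posSemidef.sqrt + α • Ct).PosDef) :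
    frobNorm (hB.posSemidef.sqrt - (hA.posSemidef.sqrt + α • Ct)) ≤
      Real.sqrt (Real.sqrt n *
        frobNorm (Z * Zᵀ - hA.posSemidef.sqrt * Ct - Ct * hA.posSemidef.sqrt - α • Ct ^ 2)) ∧
    specNorm (hB.posSemidef.sqrt - (hA.posSemidef.sqrt + α • Ct)) ≤
      min (frobNorm (Z * Zᵀ - hA.posSemidef.sqrt * Ct - Ct * hA.posSemidef.sqrt - α • Ct ^ 2) /
            Real.sqrt (lambdaMin hB.1))
        (Real.sqrt (Real.sqrt n *
          frobNorm (Z * Zᵀ - hA.posSemidef.sqrt * Ct - Ct * hA.posSemidef.sqrt - α • Ct ^ 2))) :=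
  sqrt_update_error_bound_general α hα A Z hA hB Ct hpos
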